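/- arXiv:2412.02487 — 4 statements merged into one kernel-verified Lean document; each statement's English description precedes it below -/
import Mathlib

section
/- The function M¹(s1,s2,s4) = g(s1)/(2G) + F(s1)·[ (√s1/(2G λ(s1)²))·sin²(λ(s1)(s2+ψ(s1))) − (√s1 s4²/(8G))·exp(2i λ(s1)(s2+ψ(s1))) ] satisfies (∂_{s2}M¹)·(∂_{s2}∂_{s4}M¹) − (∂_{s4}M¹)·(∂_{s2}²M¹) = F(s1)²·s1·s4/(4G²), i.e. the covariance equation with μ = F(s1)². -/
/-!
Write `θ = λ(s1)(s2 + ψ(s1))`. As a function of `s4`, `M¹ = a + u(s2) - s4² v(s2)` with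
`u ∝ F sin² θ` and `v ∝ F e^{2iθ}`. Since `∂_{s2} v = 2iλ v`, the `s4³` terms of the bracket
cancel and it equals `-2 s4 v (2iλ ∂_{s2}u - ∂_{s2}²u)`. For `u ∝ sin² θ` the factor in
parentheses is a multiple of `cos 2θ - i sin 2θ = e^{-2iθ}`, which cancels the phase of `v`.
-/

open Complex

-- `x, y` play the roles of `s2, s4`, with `s1` fixed inside `M`.
noncomputable def covarianceBracket (M : ℝ → ℝ → ℂ) (x y : ℝ) : ℂ :=
  deriv (fun b => M b y) x * deriv (fun c => deriv (fun b => M b c) x) y -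
    deriv (fun c => M x c) y * deriv (fun b => deriv (fun b' => M b' y) b) x

theorem covarianceBracket_add_sub_sq_mul {a k u'' : ℂ} {u u' v : ℝ → ℂ} {x y : ℝ}
    (hu : ∀ b, HasDerivAt u (u' b) b) (hu' : HasDerivAt u' u'' x)
    (hv : ∀ b, HasDerivAt v (k * v b) b) :
    covarianceBracket (fun b c => a + u b - (c : ℂ) ^ 2 * v b) x y =
      -2 * y * v x * (k * u' x - u'') := by
  have hsq : ∀ c : ℝ, HasDerivAt (fun c : ℝ => (c : ℂ) ^ 2) (2 * c) c := fun c => by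
    simpa using (hasDerivAt_pow 2 c).ofReal_comp
  have hb : ∀ b c : ℝ, deriv (fun b => a + u b - (c : ℂ) ^ 2 * v b) b =
      u' b - (c : ℂ) ^ 2 * (k * v b) := fun b c =>
    (((hu b).const_add a).sub ((hv b).const_mul _)).deriv
  have hbc : deriv (fun c : ℝ => u' x - (c : ℂ) ^ 2 * (k * v x)) y = -(2 * y * (k * v x)) :=
    (((hsq y).mul_const _).const_sub _).deriv
  have hc : deriv (fun c : ℝ => a + u x - (c : ℂ) ^ 2 * v x) y = -(2 * y * v x) :=
    (((hsq y).mul_const _).const_sub _).deriv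
  have hbb : deriv (fun b => u' b - (y : ℂ) ^ 2 * (k * v b)) x =
      u'' - y ^ 2 * (k * (k * v x)) :=
    (hu'.sub (((hv x).const_mul k).const_mul _)).deriv
  simp only [covarianceBracket, hb, hbc, hc, hbb]
  ring

theorem hasDerivAt_sin_mul_add_sq (L ψ b : ℝ) :
    HasDerivAt (fun b => Real.sin (L * (b + ψ)) ^ 2) (L * Real.sin (2 * (L * (b + ψ)))) b := by
  have hθ : HasDerivAt (fun b => L * (b + ψ)) L b := by
    simpa using ((hasDerivAt_id b).add_const ψ).const_mul L
  refine (hθ.sin.pow 2).congr_deriv ?_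
  rw [Real.sin_two_mul]
  ring

theorem hasDerivAt_mul_sin_two_mul_mul_add (L ψ b : ℝ) :
    HasDerivAt (fun b => L * Real.sin (2 * (L * (b + ψ))))
      (2 * L ^ 2 * Real.cos (2 * (L * (b + ψ)))) b := by
  have hθ : HasDerivAt (fun b => 2 * (L * (b + ψ))) (2 * L) b := by
    simpa using (((hasDerivAt_id b).add_const ψ).const_mul L).const_mul 2
  exact (hθ.sin.const_mul L).congr_deriv (by ring)

theorem hasDerivAt_cexp_two_mul_I_mul_add (L ψ b : ℝ) :
    HasDerivAt (fun b : ℝ => exp (2 * I * ((L * (b + ψ) : ℝ) : ℂ)))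
      (2 * I * L * exp (2 * I * ((L * (b + ψ) : ℝ) : ℂ))) b := by
  have hθ : HasDerivAt (fun b : ℝ => 2 * I * ((L * (b + ψ) : ℝ) : ℂ)) (2 * I * L) b := by
    simpa using (((hasDerivAt_id b).add_const ψ).const_mul L).ofReal_comp.const_mul (2 * I)
  exact hθ.cexp.congr_deriv (by ring)

theorem exp_mul_I_mul_cos_sub_sin_mul_I (x : ℝ) :
    exp (x * I) * (Real.cos x - Real.sin x * I) = 1 := by
  rw [exp_mul_I, ofReal_cos, ofReal_sin]
  linear_combination (sin_sq_add_cos_sq (x : ℂ)) - sin x ^ 2 * I_sq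

/-- The (complex-valued) solution `M¹` satisfies the covariance equation with
`μ = F(s1)²`. -/
theorem stmt1 (G : ℝ) (hG : 0 < G) (g F l ψ : ℝ → ℝ) (s1 s2 s4 : ℝ)
    (hs1 : 0 < s1) (hl : l s1 ≠ 0) :
    let M : ℝ → ℝ → ℝ → ℂ := fun a b c =>
      ((g a / (2 * G) : ℝ) : ℂ) +
        (F a : ℂ) *
          (((Real.sqrt a / (2 * G * (l a) ^ 2) *
              (Real.sin (l a * (b + ψ a))) ^ 2 : ℝ) : ℂ)
            - ((Real.sqrt a * c ^ 2 / (8 * G) : ℝ) : ℂ) *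
                Complex.exp (2 * Complex.I * ((l a * (b + ψ a) : ℝ) : ℂ)))
    (deriv (fun b => M s1 b s4) s2) *
        (deriv (fun c => deriv (fun b => M s1 b c) s2) s4) -
      (deriv (fun c => M s1 s2 c) s4) *
        (deriv (fun b => deriv (fun b' => M s1 b' s4) b) s2) =
      (((F s1) ^ 2 * s1 * s4 / (4 * G ^ 2) : ℝ) : ℂ) := by
  intro M
  set L := l s1
  set α := Real.sqrt s1 / (2 * G * L ^ 2)
  set β := Real.sqrt s1 / (8 * G)
  have hu : ∀ b, HasDerivAt (fun b => (F s1 : ℂ) * ((α * Real.sin (L * (b + ψ s1)) ^ 2 : ℝ) : ℂ))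
      ((F s1 : ℂ) * ((α * (L * Real.sin (2 * (L * (b + ψ s1)))) : ℝ) : ℂ)) b := fun b =>
    (((hasDerivAt_sin_mul_add_sq L (ψ s1) b).const_mul α).ofReal_comp).const_mul _
  have hu' := (((hasDerivAt_mul_sin_two_mul_mul_add L (ψ s1) s2).const_mul α).ofReal_comp).const_mul
    (F s1 : ℂ)
  have hv : ∀ b, HasDerivAt (fun b => (F s1 : ℂ) * β * exp (2 * I * ((L * (b + ψ s1) : ℝ) : ℂ)))
      (2 * I * L * ((F s1 : ℂ) * β * exp (2 * I * ((L * (b + ψ s1) : ℝ) : ℂ)))) b := fun b =>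
    ((hasDerivAt_cexp_two_mul_I_mul_add L (ψ s1) b).const_mul _).congr_deriv (by ring)
  have hM : M s1 = fun b (c : ℝ) => ((g s1 / (2 * G) : ℝ) : ℂ) +
      (F s1 : ℂ) * ((α * Real.sin (L * (b + ψ s1)) ^ 2 : ℝ) : ℂ) -
      (c : ℂ) ^ 2 * ((F s1 : ℂ) * β * exp (2 * I * ((L * (b + ψ s1) : ℝ) : ℂ))) := by
    funext b c
    simp only [M, α, β]
    push_cast
    ring
  show covarianceBracket (M s1) s2 s4 = _
  rw [hM, covarianceBracket_add_sub_sq_mul hu hu' hv]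
  have hphase := exp_mul_I_mul_cos_sub_sin_mul_I (2 * (L * (s2 + ψ s1)))
  rw [show ((2 * (L * (s2 + ψ s1)) : ℝ) : ℂ) * I = 2 * I * ((L * (s2 + ψ s1) : ℝ) : ℂ) by
    push_cast; ring] at hphase
  have hαβ : α * β * L ^ 2 = s1 / (16 * G ^ 2) := by
    simp only [α, β]
    field_simp
    rw [Real.sq_sqrt hs1.le]
    ring
  have hαβℂ : (α : ℂ) * β * L ^ 2 = s1 / (16 * G ^ 2) := by exact_mod_cast hαβ
  push_cast at hphase ⊢
  linear_combination (4 * s4 * (F s1 : ℂ) ^ 2 * α * β * L ^ 2) * hphase +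
    (4 * s4 * (F s1 : ℂ) ^ 2) * hαβℂ
end

section
/- The function M²(s1,s2,s4) = g(s1)/(2G) + F(s1)·[ (√s1/(2G λ(s1)²))·sin²(λ(s1)(s2+ψ(s1))) − (√s1 s4²/8G)·cos²(λ(s1)(s2+ψ(s1))) ] satisfies the covariance equation (∂_{s2}M²)·(∂_{s2}∂_{s4}M²) − (∂_{s4}M²)·(∂_{s2}²M²) = μ·s1·s4/(4G²) with μ = F(s1)·[F(s1) + (λ(s1)²/√s1)·(g(s1) − 2G·M²)]. -/
/-!
For fixed `s1`, `M²` is a profile `a + p sin²θ − q s4² cos²θ` in `(s2, s4)`, with phase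
`θ = λ (s2 + ψ)`. Differentiating and using `sin²θ + cos²θ = 1`, the covariance expression
collapses to `4 λ² q s4 (p + q s4²) cos²θ`, and `(p + q s4²) cos²θ = p + a − M²`.
Substituting `a = g/(2G)`, `p = F √s1/(2Gλ²)`, `q = F √s1/(8G)` gives the stated `μ`.
-/

open Real

noncomputable def sinCosProfile (a p q k φ b c : ℝ) : ℝ :=
  a + p * sin (k * (b + φ)) ^ 2 - q * c ^ 2 * cos (k * (b + φ)) ^ 2

section sinCosProfile

variable (a p q k φ : ℝ)

theorem hasDerivAt_phase (b : ℝ) : HasDerivAt (fun b => k * (b + φ)) k b := by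
  simpa using ((hasDerivAt_id b).add_const φ).const_mul k

theorem hasDerivAt_sinCosProfile_left (b c : ℝ) :
    HasDerivAt (fun b => sinCosProfile a p q k φ b c)
      (2 * k * (p + q * c ^ 2) * (sin (k * (b + φ)) * cos (k * (b + φ)))) b := by
  have hθ := hasDerivAt_phase k φ b
  refine ((((hθ.sin.fun_pow 2).const_mul p).const_add a).sub
    ((hθ.cos.fun_pow 2).const_mul (q * c ^ 2))).congr_deriv ?_
  push_cast
  ring

theorem hasDerivAt_sinCosProfile_right (b c : ℝ) :
    HasDerivAt (fun c => sinCosProfile a p q k φ b c)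
      (-(2 * q * cos (k * (b + φ)) ^ 2) * c) c := by
  refine ((hasDerivAt_const c (a + p * sin (k * (b + φ)) ^ 2)).sub
    (((hasDerivAt_pow 2 c).const_mul q).mul_const (cos (k * (b + φ)) ^ 2))).congr_deriv ?_
  push_cast
  ring

theorem deriv_deriv_sinCosProfile_left (b c : ℝ) :
    deriv (fun b => deriv (fun b' => sinCosProfile a p q k φ b' c) b) b =
      2 * k * (p + q * c ^ 2) * (k * (cos (k * (b + φ)) ^ 2 - sin (k * (b + φ)) ^ 2)) := by
  have hθ := hasDerivAt_phase k φ b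
  simp only [fun b => (hasDerivAt_sinCosProfile_left a p q k φ b c).deriv]
  rw [((hθ.sin.fun_mul hθ.cos).const_mul (2 * k * (p + q * c ^ 2))).deriv]
  ring

theorem deriv_deriv_sinCosProfile_right_left (b c : ℝ) :
    deriv (fun c => deriv (fun b => sinCosProfile a p q k φ b c) b) c =
      2 * k * (2 * q * c) * (sin (k * (b + φ)) * cos (k * (b + φ))) := by
  simp only [fun c => (hasDerivAt_sinCosProfile_left a p q k φ b c).deriv]
  rw [((((hasDerivAt_pow 2 c).const_mul q).const_add p).const_mul (2 * k)).mul_const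
    (sin (k * (b + φ)) * cos (k * (b + φ))) |>.deriv]
  push_cast
  ring

theorem sinCosProfile_covariance (b c : ℝ) :
    deriv (fun b => sinCosProfile a p q k φ b c) b *
        deriv (fun c => deriv (fun b => sinCosProfile a p q k φ b c) b) c -
      deriv (fun c => sinCosProfile a p q k φ b c) c *
        deriv (fun b => deriv (fun b' => sinCosProfile a p q k φ b' c) b) b =
      4 * k ^ 2 * q * c * (p + a - sinCosProfile a p q k φ b c) := by
  rw [(hasDerivAt_sinCosProfile_left a p q k φ b c).deriv,
    (hasDerivAt_sinCosProfile_right a p q k φ b c).deriv,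
    deriv_deriv_sinCosProfile_left, deriv_deriv_sinCosProfile_right_left]
  unfold sinCosProfile
  linear_combination (4 * k ^ 2 * q * c * ((p + q * c ^ 2) * cos (k * (b + φ)) ^ 2 + p)) *
    sin_sq_add_cos_sq (k * (b + φ))

end sinCosProfile

/-- The solution `M²` satisfies the covariance equation with
`μ = F(s1)·[F(s1) + (λ(s1)²/√s1)·(g(s1) − 2G·M²)]`. -/
theorem stmt2 (G : ℝ) (hG : 0 < G) (g F l ψ : ℝ → ℝ) (s1 s2 s4 : ℝ)
    (hs1 : 0 < s1) (hl : l s1 ≠ 0) :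
    let M : ℝ → ℝ → ℝ → ℝ := fun a b c =>
      g a / (2 * G) +
        F a * (Real.sqrt a / (2 * G * (l a) ^ 2) *
            (Real.sin (l a * (b + ψ a))) ^ 2
          - Real.sqrt a * c ^ 2 / (8 * G) *
            (Real.cos (l a * (b + ψ a))) ^ 2)
    (deriv (fun b => M s1 b s4) s2) *
        (deriv (fun c => deriv (fun b => M s1 b c) s2) s4) -
      (deriv (fun c => M s1 s2 c) s4) *
        (deriv (fun b => deriv (fun b' => M s1 b' s4) b) s2) =
      (F s1 * (F s1 + (l s1) ^ 2 / Real.sqrt s1 * (g s1 - 2 * G * M s1 s2 s4)))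
        * s1 * s4 / (4 * G ^ 2) := by
  intro M
  have hM : M s1 = sinCosProfile (g s1 / (2 * G)) (F s1 * √s1 / (2 * G * l s1 ^ 2))
      (F s1 * √s1 / (8 * G)) (l s1) (ψ s1) := by
    funext b c
    simp only [M, sinCosProfile]
    ring
  rw [hM, sinCosProfile_covariance]
  have hsqrt : √s1 ≠ 0 := (Real.sqrt_pos.mpr hs1).ne'
  field_simp
  rw [Real.sq_sqrt hs1.le]
  ring
end

section
/- For the solution M³, the factor μ₃ = F(s1)²·[1 − (2Gλ(s1)(M³−h(s1))/√s1)²] satisfies the second covariance equation (∂_{s2}μ₃)·(∂_{s4}M³) − (∂_{s4}μ₃)·(∂_{s2}M³) = 0. -/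
/-! At fixed `s1`, `μ₃` is a function of `M³` alone, so the Jacobian of `(μ₃, M³)` with respect
to `(s2, s4)` vanishes by the chain rule. -/

theorem deriv_comp_mul_deriv_sub_deriv_comp_mul_deriv_eq_zero {g : ℝ → ℝ} {f : ℝ → ℝ → ℝ}
    {x y : ℝ} (hg : DifferentiableAt ℝ g (f x y)) (hfx : DifferentiableAt ℝ (fun a => f a y) x)
    (hfy : DifferentiableAt ℝ (fun b => f x b) y) :
    deriv (fun a => g (f a y)) x * deriv (fun b => f x b) y -
      deriv (fun b => g (f x b)) y * deriv (fun a => f a y) x = 0 := by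
  have hgfx : HasDerivAt (fun a => g (f a y)) (deriv g (f x y) * deriv (fun a => f a y) x) x :=
    hg.hasDerivAt.comp x hfx.hasDerivAt
  have hgfy : HasDerivAt (fun b => g (f x b)) (deriv g (f x y) * deriv (fun b => f x b) y) y :=
    hg.hasDerivAt.comp y hfy.hasDerivAt
  rw [hgfx.deriv, hgfy.deriv]
  ring

theorem stmt4_general (G : ℝ) (h F l ψ : ℝ → ℝ) (s1 s2 s4 : ℝ) :
    let M : ℝ → ℝ → ℝ → ℝ := fun a b c =>
      h a + F a * Real.sqrt a / (2 * G * l a) *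
        Real.sin (l a * (1 + b ^ 2 - c ^ 2 / 4 + ψ a))
    let μ : ℝ → ℝ → ℝ → ℝ := fun a b c =>
      (F a) ^ 2 * (1 - (2 * G * l a * (M a b c - h a) / Real.sqrt a) ^ 2)
    (deriv (fun b => μ s1 b s4) s2) * (deriv (fun c => M s1 s2 c) s4) -
      (deriv (fun c => μ s1 s2 c) s4) * (deriv (fun b => M s1 b s4) s2) = 0 := by
  intro M μ
  exact deriv_comp_mul_deriv_sub_deriv_comp_mul_deriv_eq_zero
    (g := fun m => (F s1) ^ 2 * (1 - (2 * G * l s1 * (m - h s1) / Real.sqrt s1) ^ 2))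
    (f := M s1) (by fun_prop) (by fun_prop) (by fun_prop)

/-- For the solution `M³`, the factor `μ₃` satisfies the second covariance
equation `(∂_{s2}μ₃)·(∂_{s4}M³) − (∂_{s4}μ₃)·(∂_{s2}M³) = 0`. -/
theorem stmt4 (G : ℝ) (hG : 0 < G) (h F l ψ : ℝ → ℝ) (s1 s2 s4 : ℝ)
    (hs1 : 0 < s1) (hl : l s1 ≠ 0) :
    let M : ℝ → ℝ → ℝ → ℝ := fun a b c =>
      h a + F a * Real.sqrt a / (2 * G * l a) *
        Real.sin (l a * (1 + b ^ 2 - c ^ 2 / 4 + ψ a))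
    let μ : ℝ → ℝ → ℝ → ℝ := fun a b c =>
      (F a) ^ 2 * (1 - (2 * G * l a * (M a b c - h a) / Real.sqrt a) ^ 2)
    (deriv (fun b => μ s1 b s4) s2) * (deriv (fun c => M s1 s2 c) s4) -
      (deriv (fun c => μ s1 s2 c) s4) * (deriv (fun b => M s1 b s4) s2) = 0 :=
  stmt4_general G h F l ψ s1 s2 s4
end

section
/- For GM > m₀, the function f₃¹(x) = 1 − πx²/ζ² + (x²/ζ²)·arcsin(2GMζ²/x³) is negative for all x > x_min = (2GMζ²)^{1/3}. -/
/-!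
Write `f₃¹(x) = 1 - (x²/ζ²)(π - arcsin(2GMζ²/x³))`. For `x > x_min` the argument of `arcsin` lies
below `1`, so `π - arcsin(…) > π/2`; and the mass condition gives
`(2ζ²/π)^{3/2} = 2ζ² · m₀ < 2GMζ² < x³`, i.e. `x²/ζ² > 2/π`. The product therefore exceeds `1`.
-/

open Real

lemma sq_rpow_three_halves {y : ℝ} (hy : 0 ≤ y) : (y ^ 2) ^ ((3 : ℝ) / 2) = y ^ 3 := by
  rw [← rpow_natCast, ← rpow_mul hy]
  norm_num

lemma two_div_pi_lt_sq_div_sq {m ζ x : ℝ} (hζ : 0 < ζ) (hx : 0 ≤ x)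
    (hm : ζ / 2 * (2 / π) ^ ((3 : ℝ) / 2) < m) (hmx : 2 * m * ζ ^ 2 < x ^ 3) :
    2 / π < x ^ 2 / ζ ^ 2 := by
  rw [lt_div_iff₀ (by positivity)]
  have hcube : (2 / π * ζ ^ 2) ^ ((3 : ℝ) / 2) < (x ^ 2) ^ ((3 : ℝ) / 2) :=
    calc (2 / π * ζ ^ 2) ^ ((3 : ℝ) / 2)
        = 2 * (ζ / 2 * (2 / π) ^ ((3 : ℝ) / 2)) * ζ ^ 2 := by
          rw [mul_rpow (by positivity) (by positivity), sq_rpow_three_halves hζ.le]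
          ring
      _ < 2 * m * ζ ^ 2 := by gcongr
      _ < x ^ 3 := hmx
      _ = (x ^ 2) ^ ((3 : ℝ) / 2) := (sq_rpow_three_halves hx).symm
  exact (rpow_lt_rpow_iff (by positivity) (by positivity) (by norm_num)).1 hcube

lemma one_sub_mul_pi_sub_arcsin_neg {t u : ℝ} (ht : 2 / π < t) (hu : u < 1) :
    1 - t * (π - arcsin u) < 0 := by
  have harcsin : π / 2 < π - arcsin u := by linarith [arcsin_lt_pi_div_two.2 hu]
  have hprod : 2 / π * (π / 2) < t * (π - arcsin u) := by gcongr
  rw [show 2 / π * (π / 2) = 1 by field_simp] at hprod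
  linarith

theorem stmt12_general (G M ζ : ℝ) (hζ : 0 < ζ)
    (hm : ζ / 2 * (2 / Real.pi) ^ ((3 : ℝ) / 2) < G * M) :
    let xmin : ℝ := (2 * G * M * ζ ^ 2) ^ ((1 : ℝ) / 3)
    let f : ℝ → ℝ := fun x =>
      1 - Real.pi * x ^ 2 / ζ ^ 2 +
        x ^ 2 / ζ ^ 2 * Real.arcsin (2 * G * M * ζ ^ 2 / x ^ 3)
    ∀ x, xmin < x → f x < 0 := by
  intro xmin f x hx
  have hGM : 0 < G * M := lt_of_le_of_lt (by positivity) hm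
  have ha : 0 < 2 * G * M * ζ ^ 2 := by nlinarith [mul_pos hGM (pow_pos hζ 2)]
  have hx0 : 0 ≤ x := (rpow_nonneg ha.le _).trans hx.le
  have hcube : 2 * G * M * ζ ^ 2 < x ^ 3 := by
    have := (rpow_inv_lt_iff_of_pos ha.le hx0 three_pos).1 (by rwa [← one_div])
    exact_mod_cast this
  have hu : 2 * G * M * ζ ^ 2 / x ^ 3 < 1 := (div_lt_one (ha.trans hcube)).2 hcube
  have ht : 2 / π < x ^ 2 / ζ ^ 2 :=
    two_div_pi_lt_sq_div_sq hζ hx0 hm (by rwa [← mul_assoc])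
  calc f x = 1 - x ^ 2 / ζ ^ 2 * (π - arcsin (2 * G * M * ζ ^ 2 / x ^ 3)) := by ring
    _ < 0 := one_sub_mul_pi_sub_arcsin_neg ht hu

/-- For `GM > m₀`, the function `f₃¹(x) = 1 − πx²/ζ² + (x²/ζ²)·arcsin(2GMζ²/x³)`
is negative for all `x > x_min`. -/
theorem stmt12 (G M ζ : ℝ) (hG : 0 < G) (hM : 0 < M) (hζ : 0 < ζ)
    (hm : ζ / 2 * (2 / Real.pi) ^ ((3 : ℝ) / 2) < G * M) :
    let xmin : ℝ := (2 * G * M * ζ ^ 2) ^ ((1 : ℝ) / 3)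
    let f : ℝ → ℝ := fun x =>
      1 - Real.pi * x ^ 2 / ζ ^ 2 +
        x ^ 2 / ζ ^ 2 * Real.arcsin (2 * G * M * ζ ^ 2 / x ^ 3)
    ∀ x, xmin < x → f x < 0 :=
  stmt12_general G M ζ hζ hm
end
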